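/- arXiv:2010.09963 — 2 statements merged into one kernel-verified Lean document; each statement's English description precedes it below -/
import Mathlib

section
/- Let a ≼ b in ℕ³ with K^b I disconnected (equivalently dim_k H̃₀(K^b I;k) ≠ 0), and let v be a vertex of K^b I. If supp(b−a) is not contained in the vertex set of the connected component of v in K^b I (i.e. a does not lie behind b in the direction of the connected component of v), then the degree-0 canonical sylvan matrix entry satisfies D_{∅,v}^{a,b} = 0. -/
open Classical

noncomputable section

namespace Sylvan

/-- Exponent vectors in three variables. -/
abbrev V3 := Fin 3 → ℕ

/-- The `i`-th standard basis vector. -/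
def stdVec (i : Fin 3) : V3 := fun j => if j = i then 1 else 0

/-- A monomial ideal, identified with its (upward closed) set of exponent vectors. -/
def IsMonomialIdeal (I : Set V3) : Prop :=
  ∀ ⦃c d : V3⦄, c ∈ I → (∀ i, c i ≤ d i) → d ∈ I

/-- The 0-1 indicator vector of a squarefree face. -/
def ind (τ : Finset (Fin 3)) : V3 := fun i => if i ∈ τ then 1 else 0

/-- The Koszul simplicial complex of `I` in degree `b`:
faces `τ` with `b ≥ τ` and `x^(b-τ) ∈ I`. -/
def K (I : Set V3) (b : V3) : Set (Finset (Fin 3)) :=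
  {τ | (∀ i, ind τ i ≤ b i) ∧ (fun i => b i - ind τ i) ∈ I}

/-- `x^a` is a minimal monomial generator of `I`. -/
def IsMinGen (I : Set V3) (a : V3) : Prop :=
  a ∈ I ∧ ∀ c ∈ I, (∀ i, c i ≤ a i) → c = a

/-- Reduced simplicial chains: formal `k`-linear combinations of faces
(the empty face included). -/
abbrev Ch (k : Type) [Field k] := Finset (Fin 3) →₀ k

variable (k : Type) [Field k]

/-- The sign `(-1)^(position of v in σ)`. -/
def esgn (v : Fin 3) (σ : Finset (Fin 3)) : ℤ :=
  (-1 : ℤ) ^ (σ.filter (fun u => u < v)).card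

/-- The boundary of a single face. -/
def bd (σ : Finset (Fin 3)) : Ch k :=
  ∑ v ∈ σ, Finsupp.single (σ.erase v) ((esgn v σ : ℤ) : k)

/-- The (reduced) simplicial boundary operator. -/
def bdry : Ch k →ₗ[k] Ch k :=
  Finsupp.lsum k fun σ => LinearMap.toSpanSingleton k (Ch k) (bd k σ)

/-- `coeffSign k v σ` is the coefficient of `σ \ {v}` in `∂σ`,
i.e. the sign `(-1)^{v,σ}` of the paper. -/
def coeffSign (v : Fin 3) (σ : Finset (Fin 3)) : k :=
  bdry k (Finsupp.single σ (1:k)) (σ.erase v)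

/-- Faces of cardinality `c` (dimension `c-1`) of a simplicial complex. -/
def faces (Kc : Set (Finset (Fin 3))) (c : ℕ) : Set (Finset (Fin 3)) :=
  {σ | σ ∈ Kc ∧ σ.card = c}

/-- Basis chains attached to a set of faces. -/
def sset (A : Set (Finset (Fin 3))) : Set (Ch k) :=
  (fun σ => Finsupp.single σ (1:k)) '' A

/-- The chain group `C̃_{c-1}(K;k)`, as the span of its card-`c` faces. -/
def chains (Kc : Set (Finset (Fin 3))) (c : ℕ) : Submodule k (Ch k) :=
  Submodule.span k (sset k (faces Kc c))

/-- The boundaries `B̃_{c-1}(K;k) = ∂ C̃_c(K;k)`, sitting among card-`c` chains. -/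
def bdries (Kc : Set (Finset (Fin 3))) (c : ℕ) : Submodule k (Ch k) :=
  (chains k Kc (c+1)).map (bdry k)

/-- A shrubbery in dimension `c-1` (faces of cardinality `c`): a set `T` of card-`c`
faces whose boundaries form a basis of `∂ C̃_{c-1}(K;k)`. -/
def IsShrubbery (Kc : Set (Finset (Fin 3))) (c : ℕ) (T : Finset (Finset (Fin 3))) : Prop :=
  (T : Set (Finset (Fin 3))) ⊆ faces Kc c ∧
  LinearIndependent k
    (fun σ : (T : Set (Finset (Fin 3))) => bdry k (Finsupp.single (σ : Finset (Fin 3)) (1:k))) ∧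
  Submodule.span k ((fun σ => bdry k (Finsupp.single σ (1:k))) '' (T : Set (Finset (Fin 3)))) =
    (chains k Kc c).map (bdry k)

/-- A stake set in dimension `c-1` (faces of cardinality `c`): a set `S` of card-`c`
faces whose complement maps to a basis of `C̃/B̃`. -/
def IsStakeSet (Kc : Set (Finset (Fin 3))) (c : ℕ) (S : Finset (Finset (Fin 3))) : Prop :=
  (S : Set (Finset (Fin 3))) ⊆ faces Kc c ∧
  Submodule.span k (sset k (faces Kc c \ (S : Set (Finset (Fin 3))))) ⊓ bdries k Kc c = ⊥ ∧
  Submodule.span k (sset k (faces Kc c \ (S : Set (Finset (Fin 3))))) ⊔ bdries k Kc c =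
    chains k Kc c

/-- The circuit `ζ(τ)` of a face `τ` with respect to a shrubbery `T`:
the unique cycle of the form `τ - t` with `t ∈ span T`. -/
def circuit (T : Finset (Finset (Fin 3))) (τ : Finset (Fin 3)) : Ch k :=
  if h : ∃! z : Ch k, bdry k z = 0 ∧
      Finsupp.single τ (1:k) - z ∈ Submodule.span k (sset k (T : Set (Finset (Fin 3))))
  then h.exists.choose else 0

/-- The shrub `s(σ)` of a stake `σ` with respect to a hedge `(S,T)`:
the unique chain in `span T` whose boundary has coefficient `1` on `σ` and `0`
on all other stakes. -/
def shrub (S T : Finset (Finset (Fin 3))) (σ : Finset (Fin 3)) : Ch k :=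
  if h : ∃! s : Ch k, s ∈ Submodule.span k (sset k (T : Set (Finset (Fin 3)))) ∧
      bdry k s σ = 1 ∧ ∀ σ' ∈ S, σ' ≠ σ → bdry k s σ' = 0
  then h.exists.choose else 0

/-- The hedge rim `r(τ)` of a face `τ` with respect to a stake set `S`:
the unique chain supported outside `S` with `τ - r(τ)` a boundary. -/
def hedgeRim (Kc : Set (Finset (Fin 3))) (c : ℕ) (S : Finset (Finset (Fin 3)))
    (τ : Finset (Fin 3)) : Ch k :=
  if h : ∃! r : Ch k,
      r ∈ Submodule.span k (sset k (faces Kc c \ (S : Set (Finset (Fin 3))))) ∧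
      Finsupp.single τ (1:k) - r ∈ bdries k Kc c
  then h.exists.choose else 0

/-- The points of the saturated decreasing lattice path from `pt a d n` down to `a`
encoded by the list of directions `d` (read from `a` upwards). -/
def pt (a : V3) {n : ℕ} (d : Fin n → Fin 3) (m : ℕ) : V3 :=
  fun i => a i + ∑ m' ∈ Finset.range m, (if h : m' < n then stdVec (d ⟨m', h⟩) i else 0)

/-- The data of a hedgerow: `(Sb, S, T, Ta)`. -/
abbrev HRData (n : ℕ) :=
  Finset (Finset (Fin 3)) × (Fin (n+1) → Finset (Finset (Fin 3))) ×
    (Fin (n+1) → Finset (Finset (Fin 3))) × Finset (Finset (Fin 3))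

/-- A hedgerow in homological dimension `c-1` along the lattice path from `pt a d n`
down to `a`: a stake set in the Koszul complex at the top, a hedge at each interior
lattice point, and a shrubbery at the bottom.  (Unused components are pinned to `∅`.) -/
def IsHedgerow (I : Set V3) (a : V3) {n : ℕ} (d : Fin n → Fin 3) (c : ℕ)
    (h : HRData n) : Prop :=
  IsStakeSet k (K I (pt a d n)) c h.1 ∧
  (∀ m : Fin (n+1), 0 < (m:ℕ) → (m:ℕ) < n →
    IsStakeSet k (K I (pt a d m)) (c-1) (h.2.1 m) ∧
    IsShrubbery k (K I (pt a d m)) c (h.2.2.1 m)) ∧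
  (∀ m : Fin (n+1), ((m:ℕ) = 0 ∨ (m:ℕ) = n) → h.2.1 m = ∅ ∧ h.2.2.1 m = ∅) ∧
  IsShrubbery k (K I a) (c-1) h.2.2.2

/-- `Δ_{c-1,λ} I`: the number of hedgerows along the lattice path. -/
def Delta (I : Set V3) (a : V3) {n : ℕ} (d : Fin n → Fin 3) (c : ℕ) : ℕ :=
  Nat.card {h : HRData n // IsHedgerow k I a d c h}

/-- The data of a chain-link fence: a hedgerow together with the faces `τ_ℓ` and
`σ_ℓ` (indexed here by the lattice point `pt a d m`, so `τ_ℓ = tau (n-ℓ)` and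
`σ_ℓ = sig (n-ℓ)`). -/
abbrev FData (n : ℕ) :=
  HRData n × (Fin (n+1) → Finset (Fin 3)) × (Fin (n+1) → Finset (Fin 3))

/-- A chain-link fence from the card-`c` face `τtop` of the Koszul complex at the top
of the lattice path to the card-`(c-1)` face `σbot` of the Koszul complex at the
bottom. -/
def IsFence (I : Set V3) (a : V3) {n : ℕ} (d : Fin n → Fin 3) (c : ℕ)
    (σbot τtop : Finset (Fin 3)) (f : FData n) : Prop :=
  IsHedgerow k I a d c f.1 ∧
  (∀ m : Fin (n+1), 0 < (m:ℕ) → f.2.1 m ∈ faces (K I (pt a d m)) c) ∧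
  (∀ m : Fin (n+1), (m:ℕ) < n → f.2.2 m ∈ faces (K I (pt a d m)) (c-1)) ∧
  f.2.1 0 = ∅ ∧ f.2.2 (Fin.last n) = ∅ ∧
  hedgeRim k (K I (pt a d n)) c f.1.1 τtop (f.2.1 (Fin.last n)) ≠ 0 ∧
  (∀ m : Fin n, f.2.2 m.castSucc = (f.2.1 m.succ).erase (d m)) ∧
  (∀ m : Fin (n+1), 0 < (m:ℕ) → (m:ℕ) < n →
    f.2.2 m ∈ f.1.2.1 m ∧
    shrub k (f.1.2.1 m) (f.1.2.2.1 m) (f.2.2 m) (f.2.1 m) ≠ 0) ∧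
  circuit k f.1.2.2.2 (f.2.2 0) σbot ≠ 0

/-- The weight of a chain-link fence: the product of the boundary-link coefficient,
the chain-link coefficients, the containment coefficients, and the cycle-link
coefficient. -/
def weight (I : Set V3) (a : V3) {n : ℕ} (d : Fin n → Fin 3) (c : ℕ)
    (σbot τtop : Finset (Fin 3)) (f : FData n) : k :=
  hedgeRim k (K I (pt a d n)) c f.1.1 τtop (f.2.1 (Fin.last n)) *
  (∏ m : Fin (n+1), if 0 < (m:ℕ) ∧ (m:ℕ) < n
      then shrub k (f.1.2.1 m) (f.1.2.2.1 m) (f.2.2 m) (f.2.1 m) else 1) *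
  (∏ m : Fin n, bdry k (Finsupp.single (f.2.1 m.succ) (1:k)) (f.2.2 m.castSucc)) *
  circuit k f.1.2.2.2 (f.2.2 0) σbot

/-- `D_{σ,τ}^{a,b,λ}`: the contribution of the single lattice path `λ` (encoded by
its direction sequence `d`) to the canonical sylvan matrix entry. -/
def Dpath (I : Set V3) (a : V3) {n : ℕ} (d : Fin n → Fin 3) (c : ℕ)
    (σbot τtop : Finset (Fin 3)) : k :=
  ((Delta k I a d c : k))⁻¹ *
    ∑ᶠ f ∈ {f : FData n | IsFence k I a d c σbot τtop f}, weight k I a d c σbot τtop f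

/-- `|b - a|`, the common length of all saturated decreasing lattice paths. -/
def nlen (a b : V3) : ℕ := ∑ i, (b i - a i)

/-- The canonical sylvan matrix entry `D_{σ,τ}^{a,b}`: a sum over all saturated
decreasing lattice paths from `b` to `a`. -/
def D (I : Set V3) (a b : V3) (c : ℕ) (σbot τtop : Finset (Fin 3)) : k :=
  ∑ᶠ d ∈ {d : Fin (nlen a b) → Fin 3 | pt a d (nlen a b) = b},
    Dpath k I a d c σbot τtop

/-- `K` has exactly the set `F` as facets, i.e. it is the downward closure of `F`. -/
def hasFacets (Kc F : Set (Finset (Fin 3))) : Prop :=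
  Kc = {σ | ∃ f ∈ F, σ ⊆ f}

/-- `dim_k H̃₀(K;k) ≠ 0`: some reduced 0-cycle is not a boundary. -/
def H0nontrivial (Kc : Set (Finset (Fin 3))) : Prop :=
  ¬ (chains k Kc 1 ⊓ LinearMap.ker (bdry k) ≤ bdries k Kc 1)

/-!
A chain-link fence from `{v}` to `∅` in homological dimension `0` has `σ_ℓ = ∅` throughout,
so every lattice point of the path below `b` lies in `I` and `τ_ℓ` is the vertex in the
direction of the `ℓ`-th step. Hence two consecutive directions coincide or span an edge of
`K^b I`, and all directions lie in one connected component. It is the component of `v`,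
since the top vertex is boundary-linked to `v`: restricting chains to a connected component
maps boundaries to boundaries and non-stake chains to non-stake chains, so it annihilates
the hedge rim of every vertex outside the component. As `supp (b - a)` consists of
directions of the path, no path carries a fence and every summand of `D_{∅,v}^{a,b}`
vanishes.
-/

theorem _root_.SimpleGraph.reachable_of_reachable_succ {V : Type*} (G : SimpleGraph V) {n : ℕ}
    (d : Fin n → V)
    (h : ∀ (j : ℕ) (hj : j + 1 < n), G.Reachable (d ⟨j, by omega⟩) (d ⟨j + 1, hj⟩))
    (i j : Fin n) : G.Reachable (d i) (d j) := by
  have from_zero : ∀ (j : ℕ) (hj : j < n), G.Reachable (d ⟨0, by omega⟩) (d ⟨j, hj⟩) := by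
    intro j
    induction j with
    | zero => exact fun _ => .refl _
    | succ j ih => exact fun hj => (ih (by omega)).trans (h j hj)
  exact (from_zero i i.2).symm.trans (from_zero j j.2)

section KoszulComplex

variable {I : Set V3}

theorem K_subset_K_of_le (hI : IsMonomialIdeal I) {b b' : V3} (h : ∀ i, b' i ≤ b i) :
    K I b' ⊆ K I b := fun _ ⟨hle, hmem⟩ =>
  ⟨fun i => (hle i).trans (h i), hI hmem fun i => Nat.sub_le_sub_right (h i) _⟩

theorem empty_mem_K_iff {b : V3} : ∅ ∈ K I b ↔ b ∈ I := by
  simp [K, ind]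

theorem mem_K_of_add_ind_le (hI : IsMonomialIdeal I) {c b : V3} (hc : c ∈ I)
    {τ : Finset (Fin 3)} (h : ∀ i, c i + ind τ i ≤ b i) : τ ∈ K I b :=
  ⟨fun i => (Nat.le_add_left _ _).trans (h i), hI hc fun i => Nat.le_sub_of_add_le (h i)⟩

end KoszulComplex

section LatticePath

variable (a : V3) {n : ℕ} (d : Fin n → Fin 3)

theorem pt_succ (m : ℕ) (i : Fin 3) :
    pt a d (m + 1) i = pt a d m i + (if h : m < n then stdVec (d ⟨m, h⟩) i else 0) := by
  rw [pt, pt, Finset.sum_range_succ, Nat.add_assoc]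

theorem pt_mono {m m' : ℕ} (h : m ≤ m') (i : Fin 3) : pt a d m i ≤ pt a d m' i :=
  Nat.add_le_add_left (Finset.sum_le_sum_of_subset (Finset.range_subset_range.mpr h)) _

theorem pt_succ_apply_self (j : Fin n) : pt a d (j + 1) (d j) = pt a d j (d j) + 1 := by
  simp [pt_succ, stdVec]

theorem exists_eq_of_lt_pt {q : Fin 3} (h : a q < pt a d n q) : ∃ j, d j = q := by
  by_contra! hq
  refine h.ne (Nat.add_eq_left.mpr (Finset.sum_eq_zero fun j hj => ?_)).symm
  rw [dif_pos (Finset.mem_range.mp hj)]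
  exact if_neg (hq _).symm

variable {I : Set V3}

theorem mem_K_pt (hI : IsMonomialIdeal I) {m m' : ℕ} (hmm' : m ≤ m') (hm : pt a d m ∈ I)
    {τ : Finset (Fin 3)} (hτ : ∀ x ∈ τ, ∃ j : Fin n, m ≤ j ∧ (j : ℕ) < m' ∧ d j = x) :
    τ ∈ K I (pt a d m') := by
  refine mem_K_of_add_ind_le hI hm fun i => ?_
  by_cases hi : i ∈ τ
  · obtain ⟨j, hmj, hjm', rfl⟩ := hτ i hi
    calc pt a d m (d j) + ind τ (d j) ≤ pt a d j (d j) + 1 := by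
          simp only [ind, if_pos hi]; exact Nat.add_le_add_right (pt_mono a d hmj _) 1
      _ = pt a d (j + 1) (d j) := (pt_succ_apply_self a d j).symm
      _ ≤ pt a d m' (d j) := pt_mono a d hjm' _
  · simpa [ind, hi] using pt_mono a d hmm' i

end LatticePath

def oneSkeleton (Kc : Set (Finset (Fin 3))) : SimpleGraph (Fin 3) where
  Adj x y := x ≠ y ∧ ({x, y} : Finset (Fin 3)) ∈ Kc
  symm := ⟨fun x y h => ⟨h.1.symm, Finset.pair_comm x y ▸ h.2⟩⟩
  loopless := ⟨fun _ h => h.1 rfl⟩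

theorem oneSkeleton_reachable_of_pair_mem {Kc : Set (Finset (Fin 3))} {x y : Fin 3}
    (h : ({x, y} : Finset (Fin 3)) ∈ Kc) : (oneSkeleton Kc).Reachable x y := by
  by_cases hxy : x = y
  · exact hxy ▸ .refl x
  · exact SimpleGraph.Adj.reachable ⟨hxy, h⟩

section HedgeRim

variable {k}

theorem exists_eq_erase_of_bd_apply_ne_zero {σ ρ : Finset (Fin 3)} (h : bd k σ ρ ≠ 0) :
    ∃ w ∈ σ, ρ = σ.erase w := by
  by_contra! hρ
  refine h (Finset.sum_apply' ρ |>.trans (Finset.sum_eq_zero fun w hw => ?_))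
  exact Finsupp.single_eq_of_ne (hρ w hw)

theorem map_rim_eq_zero {Kc : Set (Finset (Fin 3))} {c : ℕ} {S : Finset (Finset (Fin 3))}
    (hS : IsStakeSet k Kc c S) (π : Ch k →ₗ[k] Ch k)
    (hπN : ∀ z ∈ Submodule.span k (sset k (faces Kc c \ (S : Set (Finset (Fin 3))))),
      π z ∈ Submodule.span k (sset k (faces Kc c \ (S : Set (Finset (Fin 3))))))
    (hπB : ∀ z ∈ bdries k Kc c, π z ∈ bdries k Kc c) {τ : Finset (Fin 3)} {r : Ch k}
    (hr : r ∈ Submodule.span k (sset k (faces Kc c \ (S : Set (Finset (Fin 3))))))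
    (hτr : Finsupp.single τ 1 - r ∈ bdries k Kc c) (hτ : π (Finsupp.single τ 1) = 0) :
    π r = 0 := by
  have hB : π r ∈ bdries k Kc c := by
    simpa [hτ] using Submodule.neg_mem _ (hπB _ hτr)
  have hbot : π r ∈ (⊥ : Submodule k (Ch k)) := hS.2.1 ▸ ⟨hπN r hr, hB⟩
  exact (Submodule.mem_bot k).mp hbot

def restrictToComponent (G : SimpleGraph (Fin 3)) (u : Fin 3) : Ch k →ₗ[k] Ch k where
  toFun z := z.filter fun σ => ∃ x, G.Reachable u x ∧ σ = {x}
  map_add' _ _ := Finsupp.filter_add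
  map_smul' _ _ := Finsupp.filter_smul

theorem restrictToComponent_apply (G : SimpleGraph (Fin 3)) (u : Fin 3) (z : Ch k) :
    restrictToComponent G u z = z.filter fun σ => ∃ x, G.Reachable u x ∧ σ = {x} := rfl

theorem restrictToComponent_mem_span_sset (G : SimpleGraph (Fin 3)) (u : Fin 3)
    (A : Set (Finset (Fin 3))) {z : Ch k} (hz : z ∈ Submodule.span k (sset k A)) :
    restrictToComponent G u z ∈ Submodule.span k (sset k A) := by
  rw [sset, ← Finsupp.supported_eq_span_single] at hz ⊢
  exact (Finset.coe_subset.mpr (Finset.filter_subset _ _)).trans hz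

theorem restrictToComponent_mem_bdries (Kc : Set (Finset (Fin 3))) (u : Fin 3) {z : Ch k}
    (hz : z ∈ bdries k Kc 1) : restrictToComponent (oneSkeleton Kc) u z ∈ bdries k Kc 1 := by
  rw [bdries, chains, Submodule.map_span] at hz ⊢
  refine Submodule.mem_comap.mp
    ((Submodule.span_le (p := Submodule.comap (restrictToComponent (oneSkeleton Kc) u) _)).mpr
      (fun w hw => ?_) hz)
  obtain ⟨_, ⟨σ, ⟨hσK, hσ⟩, rfl⟩, rfl⟩ := hw
  obtain ⟨x, y, hxy, rfl⟩ := Finset.card_eq_two.mp hσ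
  have hsupp : ∀ ρ, bd k {x, y} ρ ≠ 0 → ρ = {x} ∨ ρ = {y} := by
    intro ρ hρ
    obtain ⟨w, hw, rfl⟩ := exists_eq_erase_of_bd_apply_ne_zero hρ
    rcases Finset.mem_insert.mp hw with rfl | hw
    · exact .inr (Finset.erase_insert (by simpa using hxy))
    · rw [Finset.mem_singleton.mp hw, Finset.pair_comm]
      exact .inl (Finset.erase_insert (by simpa using hxy.symm))
  have hxy_reach : (oneSkeleton Kc).Reachable x y := SimpleGraph.Adj.reachable ⟨hxy, hσK⟩
  have hbd : bdry k (Finsupp.single {x, y} 1) = bd k {x, y} := by simp [bdry]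
  rw [SetLike.mem_coe, Submodule.mem_comap, hbd]
  by_cases hux : (oneSkeleton Kc).Reachable u x
  · rw [restrictToComponent_apply, (Finsupp.filter_eq_self_iff _ _).mpr fun ρ hρ => ?_, ← hbd]
    · exact Submodule.subset_span ⟨_, ⟨_, ⟨hσK, hσ⟩, rfl⟩, rfl⟩
    · rcases hsupp ρ hρ with rfl | rfl
      exacts [⟨x, hux, rfl⟩, ⟨y, hux.trans hxy_reach, rfl⟩]
  · have hzero : restrictToComponent (oneSkeleton Kc) u (bd k {x, y}) = 0 := by
      refine (Finsupp.filter_eq_zero_iff _ _).mpr ?_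
      rintro ρ ⟨z, huz, rfl⟩
      by_contra hz
      rcases hsupp _ hz with h | h <;> obtain rfl := Finset.singleton_injective h
      exacts [hux huz, hux (huz.trans hxy_reach.symm)]
    rw [hzero]
    exact Submodule.zero_mem _

theorem reachable_of_hedgeRim_ne_zero {Kc : Set (Finset (Fin 3))} {S : Finset (Finset (Fin 3))}
    (hS : IsStakeSet k Kc 1 S) {v u : Fin 3} (h : hedgeRim k Kc 1 S {v} {u} ≠ 0) :
    (oneSkeleton Kc).Reachable v u := by
  rw [hedgeRim] at h
  split_ifs at h with hex
  · set r := hex.exists.choose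
    obtain ⟨hr, hvr⟩ : _ ∧ _ := hex.exists.choose_spec
    by_contra hvu
    have hπv : restrictToComponent (oneSkeleton Kc) u (Finsupp.single {v} (1 : k)) = 0 :=
      Finsupp.filter_single_of_neg _ fun ⟨x, hux, hvx⟩ =>
        hvu (Finset.singleton_injective hvx ▸ hux.symm)
    have hπr := map_rim_eq_zero hS _ (fun _ => restrictToComponent_mem_span_sset _ u _)
      (fun _ => restrictToComponent_mem_bdries Kc u) hr hvr hπv
    have hπu : restrictToComponent (oneSkeleton Kc) u r {u} = r {u} :=
      Finsupp.filter_apply_pos _ _ ⟨u, .refl u, rfl⟩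
    exact h (hπu ▸ congrArg (· {u}) hπr)
  · exact absurd rfl h

end HedgeRim

section Fence

variable {k} {I : Set V3} {a : V3} {n : ℕ} {d : Fin n → Fin 3} {σbot τtop : Finset (Fin 3)}
  {f : FData n}

theorem pt_mem_of_isFence (hf : IsFence k I a d 1 σbot τtop f) {m : ℕ} (hm : m < n) :
    pt a d m ∈ I := by
  obtain ⟨hσK, hσ⟩ := hf.2.2.1 ⟨m, by omega⟩ hm
  rw [Finset.card_eq_zero.mp hσ] at hσK
  exact empty_mem_K_iff.mp hσK

theorem face_succ_of_isFence (hf : IsFence k I a d 1 σbot τtop f) (j : Fin n) :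
    f.2.1 j.succ = {d j} := by
  obtain ⟨-, hτ, hσ, -, -, -, herase, -⟩ := hf
  have hcard : (f.2.1 j.succ).card = 1 := (hτ j.succ j.succ_pos).2
  have hempty := herase j
  rw [Finset.card_eq_zero.mp (hσ j.castSucc j.2).2, eq_comm, Finset.erase_eq_empty_iff] at hempty
  exact hempty.resolve_left fun h => by simp [h] at hcard

theorem reachable_of_isFence (hI : IsMonomialIdeal I) {v : Fin 3}
    (hf : IsFence k I a d 1 ∅ {v} f) (j : Fin n) :
    {d j} ∈ K I (pt a d n) ∧ (oneSkeleton (K I (pt a d n))).Reachable v (d j) := by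
  have hvert : {d j} ∈ K I (pt a d n) :=
    K_subset_K_of_le hI (pt_mono a d j.2) <| mem_K_pt a d hI (Nat.le_succ j)
      (pt_mem_of_isFence hf j.2) fun x hx => ⟨j, le_rfl, Nat.lt_succ_self j,
        (Finset.mem_singleton.mp hx).symm⟩
  have hstep : ∀ (m : ℕ) (hm : m + 1 < n),
      (oneSkeleton (K I (pt a d n))).Reachable (d ⟨m, by omega⟩) (d ⟨m + 1, hm⟩) := by
    intro m hm
    refine oneSkeleton_reachable_of_pair_mem <| K_subset_K_of_le hI (pt_mono a d hm) <|
      mem_K_pt a d hI (Nat.le_add_right m 2) (pt_mem_of_isFence hf (by omega)) fun x hx => ?_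
    rcases Finset.mem_insert.mp hx with rfl | hx
    · exact ⟨_, le_rfl, by simp, rfl⟩
    · exact ⟨_, by simp, by simp, (Finset.mem_singleton.mp hx).symm⟩
  have hn : n - 1 < n := by have := j.2; omega
  have htop : (oneSkeleton (K I (pt a d n))).Reachable v (d ⟨n - 1, hn⟩) := by
    have hrim := hf.2.2.2.2.2.1
    rw [show Fin.last n = (⟨n - 1, hn⟩ : Fin n).succ from Fin.ext (by
      simp only [Fin.val_last, Fin.val_succ]; omega),
      face_succ_of_isFence hf] at hrim
    exact reachable_of_hedgeRim_ne_zero hf.1.1 hrim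
  exact ⟨hvert, htop.trans (SimpleGraph.reachable_of_reachable_succ _ d hstep _ _)⟩

end Fence

theorem statement1_general (k : Type) [Field k]
    (I : Set V3) (hI : IsMonomialIdeal I) (a b : V3)
    (v : Fin 3)
    (hcomp : ¬ ({q : Fin 3 | a q < b q} ⊆
      {u : Fin 3 | ({u} : Finset (Fin 3)) ∈ K I b ∧
        Relation.ReflTransGen
          (fun x y : Fin 3 => x ≠ y ∧ ({x, y} : Finset (Fin 3)) ∈ K I b) v u})) :
    D k I a b 1 (∅ : Finset (Fin 3)) ({v} : Finset (Fin 3)) = 0 := by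
  obtain ⟨q, hq, hqv⟩ := Set.not_subset.mp hcomp
  refine finsum_mem_of_eqOn_zero fun d (hd : pt a d (nlen a b) = b) => ?_
  obtain ⟨j, rfl⟩ := exists_eq_of_lt_pt a d (by rw [hd]; exact hq)
  have hno_fence : {f | IsFence k I a d 1 ∅ {v} f} = ∅ :=
    Set.eq_empty_of_forall_notMem fun f hf => hqv <| by
      obtain ⟨hvert, hreach⟩ := reachable_of_isFence hI hf j
      rw [hd] at hvert hreach
      exact ⟨hvert, (SimpleGraph.reachable_iff_reflTransGen _ _).mp hreach⟩
  simp [Dpath, hno_fence]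

/-- If `a` does not lie behind `b` in the direction of the connected
component of the vertex `v` of `K^b I`, then `D_{∅,v}^{a,b} = 0`. -/
theorem statement1 (k : Type) [Field k] (h2 : (2:k) ≠ 0) (h3 : (3:k) ≠ 0)
    (I : Set V3) (hI : IsMonomialIdeal I) (a b : V3) (hab : ∀ q, a q ≤ b q)
    (hH0 : H0nontrivial k (K I b))
    (v : Fin 3) (hv : ({v} : Finset (Fin 3)) ∈ K I b)
    (hcomp : ¬ ({q : Fin 3 | a q < b q} ⊆
      {u : Fin 3 | ({u} : Finset (Fin 3)) ∈ K I b ∧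
        Relation.ReflTransGen
          (fun x y : Fin 3 => x ≠ y ∧ ({x, y} : Finset (Fin 3)) ∈ K I b) v u})) :
    D k I a b 1 (∅ : Finset (Fin 3)) ({v} : Finset (Fin 3)) = 0 :=
  statement1_general k I hI a b v hcomp

end Sylvan

end
end

section
/- Let b ∈ ℕ³ and a = b − e_i, and suppose K^b I is ⟨ij,ik,jk⟩ and K^a I is ⟨ij,k⟩ or ⟨i,j,k⟩. Then the degree-1 canonical sylvan matrix D^{a,b} (rows indexed by the vertices i,j,k of K^a I, columns by the edges of K^b I) is: D_{i,ij} = (−1)^{j,ij}/3, D_{j,ij} = 2(−1)^{i,ij}/3, D_{k,ij} = (−1)^{j,ij}/3; D_{i,ik} = (−1)^{k,ik}/3, D_{j,ik} = (−1)^{k,ik}/3, D_{k,ik} = 2(−1)^{i,ik}/3; and D_{v,jk} = 0 for every vertex v. -/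
open Classical

noncomputable section

namespace Sylvan

variable (k : Type) [Field k]

/-!
There is a single lattice path from `b` down to `a = b - e_i`, of length one, so everything is
read off the two end complexes. `K^b I` has no triangle, so `B̃₁ = 0`: the only stake set is
empty and the hedge rim of an edge is the edge itself. `K^a I` contains all three vertices, so
the shrubberies in dimension 0 are the single vertices `{v}` and `Δ = 3`. A fence from an edge
`τ` must drop `i`; if `τ = {i, u}` it lands on `u`, whose circuit in the shrubbery `{v}` is
`u - v`, so summing over `v` the coefficient on `w` is `3δ_{uw} - 1`. The edge `{j, l}` does
not contain `i`, so no fence starts there.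
-/

lemma mem_span_sset {A : Set (Finset (Fin 3))} {x : Ch k} :
    x ∈ Submodule.span k (sset k A) ↔ ↑x.support ⊆ A := by
  rw [sset, ← Finsupp.supported_eq_span_single, Finsupp.mem_supported]

lemma single_mem_span_sset {A : Set (Finset (Fin 3))} {σ : Finset (Fin 3)} :
    Finsupp.single σ (1 : k) ∈ Submodule.span k (sset k A) ↔ σ ∈ A := by
  simp [mem_span_sset]

lemma bdry_single (σ : Finset (Fin 3)) (c : k) :
    bdry k (Finsupp.single σ c) = c • bd k σ := by
  simp [bdry, LinearMap.toSpanSingleton_apply]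

lemma bdry_single_of_card_eq_one {σ : Finset (Fin 3)} (hσ : σ.card = 1) :
    bdry k (Finsupp.single σ 1) = Finsupp.single ∅ 1 := by
  obtain ⟨v, rfl⟩ := Finset.card_eq_one.mp hσ
  simp [bdry_single, bd, esgn, Finset.filter_singleton]

lemma coeffSign_eq_esgn {v : Fin 3} {σ : Finset (Fin 3)} (hv : v ∈ σ) :
    coeffSign k v σ = ((esgn v σ : ℤ) : k) := by
  rw [coeffSign, bdry_single, one_smul, bd, Finsupp.finsetSum_apply,
    Finset.sum_eq_single v (fun u hu huv => by simp [Finset.erase_inj σ hu, huv]) (by simp [hv]),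
    Finsupp.single_eq_same]

lemma esgn_pair_comm : ∀ u w : Fin 3, u ≠ w → esgn w {u, w} = - esgn u {u, w} := by decide

lemma coeffSign_pair_comm {u w : Fin 3} (h : u ≠ w) :
    coeffSign k w {u, w} = - coeffSign k u {u, w} := by
  rw [coeffSign_eq_esgn k (by simp), coeffSign_eq_esgn k (by simp), esgn_pair_comm u w h]
  push_cast
  rfl

lemma Fin3.eq_or_eq_or_eq {i j l : Fin 3} (hij : i ≠ j) (hil : i ≠ l) (hjl : j ≠ l)
    (v : Fin 3) : v = i ∨ v = j ∨ v = l := by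
  omega

section Facets

variable {Kc F : Set (Finset (Fin 3))}

lemma hasFacets.mem (h : hasFacets Kc F) {f σ : Finset (Fin 3)} (hf : f ∈ F) (hσ : σ ⊆ f) :
    σ ∈ Kc :=
  h ▸ ⟨f, hf, hσ⟩

lemma hasFacets.faces_eq_empty (h : hasFacets Kc F) {c : ℕ} (hF : ∀ f ∈ F, f.card < c) :
    faces Kc c = ∅ := by
  refine Set.eq_empty_of_forall_notMem fun σ ⟨hσ, hc⟩ => ?_
  rw [h] at hσ
  obtain ⟨f, hf, hσf⟩ := hσ
  have := Finset.card_le_card hσf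
  have := hF f hf
  omega

lemma hasFacets.faces_one_eq (h : hasFacets Kc F) (hF : ∀ v, ∃ f ∈ F, v ∈ f) :
    faces Kc 1 = {σ | σ.card = 1} := by
  refine Set.ext fun σ => ⟨And.right, fun hσ => ⟨?_, hσ⟩⟩
  obtain ⟨v, rfl⟩ := Finset.card_eq_one.mp hσ
  obtain ⟨f, hf, hv⟩ := hF v
  exact h.mem hf (Finset.singleton_subset_iff.mpr hv)

end Facets

section Complex

variable {Kc : Set (Finset (Fin 3))} {c : ℕ}

lemma bdries_eq_bot_of_faces_eq_empty (h : faces Kc (c + 1) = ∅) : bdries k Kc c = ⊥ := by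
  simp [bdries, chains, h, sset]

lemma isStakeSet_iff_eq_empty (hbd : bdries k Kc c = ⊥) {S : Finset (Finset (Fin 3))} :
    IsStakeSet k Kc c S ↔ S = ∅ := by
  constructor
  · rintro ⟨hS, -, hspan⟩
    rw [hbd, sup_bot_eq] at hspan
    refine Finset.eq_empty_of_forall_notMem fun σ hσ => ?_
    have hσc : Finsupp.single σ (1 : k) ∈ chains k Kc c :=
      Submodule.subset_span ⟨σ, hS hσ, rfl⟩
    rw [← hspan, single_mem_span_sset] at hσc
    exact hσc.2 hσ
  · rintro rfl
    simp [IsStakeSet, hbd, chains]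

lemma hedgeRim_empty (hbd : bdries k Kc c = ⊥) {τ : Finset (Fin 3)} (hτ : τ ∈ faces Kc c) :
    hedgeRim k Kc c ∅ τ = Finsupp.single τ 1 := by
  have hrim : Finsupp.single τ (1 : k) ∈
        Submodule.span k (sset k (faces Kc c \ ((∅ : Finset (Finset (Fin 3))) : Set _))) ∧
      Finsupp.single τ (1 : k) - Finsupp.single τ 1 ∈ bdries k Kc c := by
    simp [single_mem_span_sset, hτ]
  have huniq : ∃! r : Ch k,
      r ∈ Submodule.span k (sset k (faces Kc c \ ((∅ : Finset (Finset (Fin 3))) : Set _))) ∧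
      Finsupp.single τ (1 : k) - r ∈ bdries k Kc c :=
    ⟨_, hrim, fun r ⟨_, hr⟩ => by
      rw [hbd, Submodule.mem_bot, sub_eq_zero] at hr
      exact hr.symm⟩
  rw [hedgeRim, dif_pos huniq]
  exact huniq.unique huniq.exists.choose_spec hrim

lemma faces_one_nonempty (h : faces Kc 1 = {σ | σ.card = 1}) : (faces Kc 1).Nonempty :=
  ⟨{0}, by rw [h]; rfl⟩

lemma map_bdry_chains_one (hne : (faces Kc 1).Nonempty) :
    (chains k Kc 1).map (bdry k) = Submodule.span k {Finsupp.single ∅ 1} := by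
  rw [chains, Submodule.map_span, sset, Set.image_image,
    Set.image_congr fun σ hσ => bdry_single_of_card_eq_one k hσ.2, hne.image_const]

lemma isShrubbery_one_iff (hne : (faces Kc 1).Nonempty) {T : Finset (Finset (Fin 3))} :
    IsShrubbery k Kc 1 T ↔ ∃ ρ ∈ faces Kc 1, T = {ρ} := by
  have hbd : ∀ σ ∈ faces Kc 1, bdry k (Finsupp.single σ 1) = Finsupp.single ∅ 1 :=
    fun σ hσ => bdry_single_of_card_eq_one k hσ.2
  constructor
  · rintro ⟨hT, hli, hspan⟩
    obtain ⟨ρ, hρ⟩ : T.Nonempty := by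
      refine Finset.nonempty_iff_ne_empty.mpr fun hT0 => ?_
      rw [map_bdry_chains_one k hne, hT0, Finset.coe_empty, Set.image_empty,
        Submodule.span_empty, eq_comm, Submodule.span_singleton_eq_bot] at hspan
      exact one_ne_zero (Finsupp.single_eq_zero.mp hspan)
    refine ⟨ρ, hT hρ, Finset.eq_singleton_iff_unique_mem.mpr ⟨hρ, fun σ hσ => ?_⟩⟩
    have h : (⟨σ, hσ⟩ : (T : Set (Finset (Fin 3)))) = ⟨ρ, hρ⟩ :=
      hli.injective (by simp only [hbd σ (hT hσ), hbd ρ (hT hρ)])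
    exact congrArg Subtype.val h
  · rintro ⟨ρ, hρ, rfl⟩
    refine ⟨by simpa using hρ, ?_, ?_⟩
    · rw [Finset.coe_singleton]
      refine (linearIndependent_subsingleton_index_iff _).mpr fun σ => ?_
      rw [show (σ : Finset (Fin 3)) = ρ from σ.2, hbd ρ hρ]
      exact Finsupp.single_ne_zero.mpr one_ne_zero
    · rw [map_bdry_chains_one k hne, Finset.coe_singleton, Set.image_singleton, hbd ρ hρ]

end Complex

lemma circuit_singleton {σ τ : Finset (Fin 3)}
    (hστ : bdry k (Finsupp.single σ 1) = bdry k (Finsupp.single τ 1))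
    (hτ : bdry k (Finsupp.single τ 1) ≠ 0) :
    circuit k {τ} σ = Finsupp.single σ 1 - Finsupp.single τ 1 := by
  have hspan : Submodule.span k (sset k ({τ} : Finset (Finset (Fin 3)))) =
      k ∙ Finsupp.single τ 1 := by
    rw [sset, Finset.coe_singleton, Set.image_singleton]
  have hcirc : bdry k (Finsupp.single σ 1 - Finsupp.single τ 1) = 0 ∧
      Finsupp.single σ (1 : k) - (Finsupp.single σ 1 - Finsupp.single τ 1) ∈
        Submodule.span k (sset k ({τ} : Finset (Finset (Fin 3)))) := by
    rw [map_sub, hστ, sub_self, sub_sub_cancel, hspan]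
    exact ⟨rfl, Submodule.mem_span_singleton_self _⟩
  have huniq : ∃! z : Ch k, bdry k z = 0 ∧
      Finsupp.single σ (1 : k) - z ∈
        Submodule.span k (sset k ({τ} : Finset (Finset (Fin 3)))) := by
    refine ⟨_, hcirc, fun z ⟨hz, hzτ⟩ => ?_⟩
    rw [hspan, Submodule.mem_span_singleton] at hzτ
    obtain ⟨t, ht⟩ := hzτ
    have h1t : (1 - t) • bdry k (Finsupp.single τ 1) = 0 := by
      have := congrArg (bdry k) ht
      rw [map_smul, map_sub, hz, sub_zero, hστ] at this
      rw [sub_smul, one_smul, this, sub_self]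
    have ht1 : t = 1 := (sub_eq_zero.mp ((smul_eq_zero.mp h1t).resolve_right hτ)).symm
    rw [ht1, one_smul] at ht
    rw [ht, sub_sub_cancel]
  rw [circuit, dif_pos huniq]
  exact huniq.unique huniq.exists.choose_spec hcirc

lemma circuit_vertex_apply (u v w : Fin 3) :
    circuit k {{v}} {u} {w} = (if u = w then 1 else 0) - (if v = w then 1 else 0) := by
  rw [circuit_singleton k (by simp [bdry_single_of_card_eq_one])
    (by simp [bdry_single_of_card_eq_one])]
  simp [Finsupp.single_apply]

lemma sum_circuit_vertex_apply (u w : Fin 3) :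
    ∑ v, circuit k {{v}} {u} {w} = if u = w then 2 else -1 := by
  simp only [circuit_vertex_apply, Finset.sum_sub_distrib, Finset.sum_ite_eq', Finset.mem_univ,
    if_true, Finset.sum_const, Finset.card_univ, Fintype.card_fin]
  split_ifs <;> norm_num

section OneStepPath

variable {I : Set V3} {a b : V3} {i : Fin 3} {σ τ : Finset (Fin 3)}

lemma pt_zero {n : ℕ} (d : Fin n → Fin 3) : pt a d 0 = a := by
  funext q
  simp [pt]

lemma pt_one (d : Fin 1 → Fin 3) : pt a d 1 = fun q => a q + stdVec (d 0) q := by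
  funext q
  simp [pt]

lemma pt_one_const (hB : ∀ q, b q = a q + stdVec i q) : pt a (fun _ : Fin 1 => i) 1 = b := by
  rw [pt_one]
  exact funext fun q => (hB q).symm

lemma nlen_eq_one (hB : ∀ q, b q = a q + stdVec i q) : nlen a b = 1 := by
  simp [nlen, hB, stdVec]

lemma setOf_pt_eq (hB : ∀ q, b q = a q + stdVec i q) :
    {d : Fin 1 → Fin 3 | pt a d 1 = b} = {fun _ => i} := by
  ext d
  refine ⟨fun hd => funext fun m => ?_, fun hd => hd ▸ pt_one_const hB⟩
  have hq := congrFun hd (d 0)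
  rw [pt_one, hB] at hq
  rw [Subsingleton.elim m 0]
  by_contra hne
  simp [stdVec, hne] at hq

lemma D_eq_Dpath (hB : ∀ q, b q = a q + stdVec i q) (c : ℕ) (σ τ : Finset (Fin 3)) :
    D k I a b c σ τ = Dpath k I a (fun _ : Fin 1 => i) c σ τ := by
  rw [D, nlen_eq_one hB, setOf_pt_eq hB, finsum_mem_singleton]

def lineHedgerow (v : Fin 3) : HRData 1 :=
  (∅, fun _ => ∅, fun _ => ∅, {{v}})

lemma lineHedgerow_injective : Function.Injective lineHedgerow := fun v w h => by
  simpa [lineHedgerow] using congrArg (fun h : HRData 1 => h.2.2.2) h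

lemma isHedgerow_iff (hB : ∀ q, b q = a q + stdVec i q) (hbd : bdries k (K I b) 2 = ⊥)
    (ha1 : faces (K I a) 1 = {σ | σ.card = 1}) {h : HRData 1} :
    IsHedgerow k I a (fun _ : Fin 1 => i) 2 h ↔ ∃ v, h = lineHedgerow v := by
  have hne := faces_one_nonempty ha1
  constructor
  · obtain ⟨S, Sm, Tm, T⟩ := h
    rintro ⟨hS, -, hends, hT⟩
    rw [pt_one_const hB, isStakeSet_iff_eq_empty k hbd] at hS
    obtain ⟨ρ, hρ, rfl⟩ := (isShrubbery_one_iff k hne).mp hT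
    rw [ha1] at hρ
    obtain ⟨v, rfl⟩ := Finset.card_eq_one.mp hρ
    have hends' : ∀ m : Fin 2, Sm m = ∅ ∧ Tm m = ∅ := fun m => hends m (by omega)
    refine ⟨v, ?_⟩
    simp only at hS
    simp only [lineHedgerow, hS, funext fun m => (hends' m).1, funext fun m => (hends' m).2]
  · rintro ⟨v, rfl⟩
    refine ⟨?_, fun m h0 h1 => by omega, fun m _ => ⟨rfl, rfl⟩, ?_⟩
    · rw [pt_one_const hB, isStakeSet_iff_eq_empty k hbd]
      rfl
    · exact (isShrubbery_one_iff k hne).mpr ⟨{v}, by simp [ha1], rfl⟩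

lemma Delta_eq_three (hB : ∀ q, b q = a q + stdVec i q) (hbd : bdries k (K I b) 2 = ⊥)
    (ha1 : faces (K I a) 1 = {σ | σ.card = 1}) :
    Delta k I a (fun _ : Fin 1 => i) 2 = 3 := by
  have hset : {h : HRData 1 | IsHedgerow k I a (fun _ : Fin 1 => i) 2 h} =
      Set.range lineHedgerow := by
    ext h
    simp [isHedgerow_iff k hB hbd ha1, eq_comm]
  rw [Delta, ← Set.coe_ofPred, hset, Nat.card_range_of_injective lineHedgerow_injective,
    Nat.card_eq_fintype_card, Fintype.card_fin]

def lineFence (i v : Fin 3) (τ : Finset (Fin 3)) : FData 1 :=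
  (lineHedgerow v, ![∅, τ], ![τ.erase i, ∅])

lemma lineFence_injective (i : Fin 3) (τ : Finset (Fin 3)) :
    Function.Injective fun v => lineFence i v τ :=
  fun _ _ h => lineHedgerow_injective (congrArg Prod.fst h)

lemma isFence_lineFence_iff (hB : ∀ q, b q = a q + stdVec i q) (hbd : bdries k (K I b) 2 = ⊥)
    (ha1 : faces (K I a) 1 = {σ | σ.card = 1}) (hτ : τ ∈ faces (K I b) 2) (v : Fin 3) :
    IsFence k I a (fun _ : Fin 1 => i) 2 σ τ (lineFence i v τ) ↔
      (τ.erase i).card = 1 ∧ circuit k {{v}} (τ.erase i) σ ≠ 0 := by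
  simp [IsFence, lineFence, isHedgerow_iff k hB hbd ha1, Fin.forall_fin_two, pt_one_const hB,
    pt_zero, hedgeRim_empty k hbd hτ, hτ, ha1, lineHedgerow]

lemma eq_lineFence_of_isFence (hB : ∀ q, b q = a q + stdVec i q) (hbd : bdries k (K I b) 2 = ⊥)
    (ha1 : faces (K I a) 1 = {σ | σ.card = 1}) (hτ : τ ∈ faces (K I b) 2) {f : FData 1}
    (hf : IsFence k I a (fun _ : Fin 1 => i) 2 σ τ f) : ∃ v, f = lineFence i v τ := by
  obtain ⟨h, top, bot⟩ := f
  obtain ⟨hh, -, -, htop0, hbot1, hrim, hlink, -, -⟩ := hf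
  obtain ⟨v, rfl⟩ := (isHedgerow_iff k hB hbd ha1).mp hh
  have htop1 : top 1 = τ := by
    by_contra hne
    simp [pt_one_const hB, lineHedgerow, hedgeRim_empty k hbd hτ,
      Ne.symm hne] at hrim
  have hbot0 : bot 0 = τ.erase i := by simpa [htop1] using hlink 0
  refine ⟨v, ?_⟩
  simp only [lineFence, Prod.mk.injEq, true_and]
  constructor <;> funext m <;> fin_cases m <;> assumption

lemma weight_lineFence (hB : ∀ q, b q = a q + stdVec i q) (hbd : bdries k (K I b) 2 = ⊥)
    (hτ : τ ∈ faces (K I b) 2) (v : Fin 3) :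
    weight k I a (fun _ : Fin 1 => i) 2 σ τ (lineFence i v τ) =
      coeffSign k i τ * circuit k {{v}} (τ.erase i) σ := by
  simp [weight, lineFence, lineHedgerow, pt_one_const hB, hedgeRim_empty k hbd hτ, coeffSign]

lemma setOf_isFence_eq (hB : ∀ q, b q = a q + stdVec i q) (hbd : bdries k (K I b) 2 = ⊥)
    (ha1 : faces (K I a) 1 = {σ | σ.card = 1}) (hτ : τ ∈ faces (K I b) 2) :
    {f | IsFence k I a (fun _ : Fin 1 => i) 2 σ τ f} =
      (fun v => lineFence i v τ) ''
        {v | (τ.erase i).card = 1 ∧ circuit k {{v}} (τ.erase i) σ ≠ 0} := by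
  ext f
  constructor
  · intro hf
    obtain ⟨v, rfl⟩ := eq_lineFence_of_isFence k hB hbd ha1 hτ hf
    exact ⟨v, (isFence_lineFence_iff k hB hbd ha1 hτ v).mp hf, rfl⟩
  · rintro ⟨v, hv, rfl⟩
    exact (isFence_lineFence_iff k hB hbd ha1 hτ v).mpr hv

lemma Dpath_eq_of_mem (hB : ∀ q, b q = a q + stdVec i q) (hbd : bdries k (K I b) 2 = ⊥)
    (ha1 : faces (K I a) 1 = {σ | σ.card = 1}) (hτ : τ ∈ faces (K I b) 2) (hi : i ∈ τ) :
    Dpath k I a (fun _ : Fin 1 => i) 2 σ τ =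
      coeffSign k i τ * (∑ v, circuit k {{v}} (τ.erase i) σ) / 3 := by
  have hcard : (τ.erase i).card = 1 := by rw [Finset.card_erase_of_mem hi, hτ.2]
  rw [Dpath, Delta_eq_three k hB hbd ha1, setOf_isFence_eq k hB hbd ha1 hτ,
    finsum_mem_image (lineFence_injective i τ).injOn]
  simp only [weight_lineFence k hB hbd hτ, hcard, true_and]
  rw [finsum_mem_inter_support_eq' _ _ Set.univ fun v hv => by simpa using right_ne_zero_of_mul hv,
    finsum_mem_univ, finsum_eq_sum_of_fintype, ← Finset.mul_sum]
  push_cast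
  ring

lemma Dpath_eq_zero_of_notMem (hB : ∀ q, b q = a q + stdVec i q) (hbd : bdries k (K I b) 2 = ⊥)
    (ha1 : faces (K I a) 1 = {σ | σ.card = 1}) (hτ : τ ∈ faces (K I b) 2) (hi : i ∉ τ) :
    Dpath k I a (fun _ : Fin 1 => i) 2 σ τ = 0 := by
  have hcard : (τ.erase i).card ≠ 1 := by rw [Finset.erase_eq_of_notMem hi, hτ.2]; decide
  rw [Dpath, setOf_isFence_eq k hB hbd ha1 hτ]
  simp [hcard]

lemma D_vertex_edge (hB : ∀ q, b q = a q + stdVec i q) (hbd : bdries k (K I b) 2 = ⊥)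
    (ha1 : faces (K I a) 1 = {σ | σ.card = 1}) {u : Fin 3} (hiu : i ≠ u)
    (hτ : {i, u} ∈ K I b) (w : Fin 3) :
    D k I a b 2 {w} {i, u} = (if u = w then 2 else -1) * coeffSign k i {i, u} / 3 := by
  have hface : {i, u} ∈ faces (K I b) 2 := ⟨hτ, Finset.card_pair hiu⟩
  have herase : ({i, u} : Finset (Fin 3)).erase i = {u} := by
    rw [Finset.erase_insert (by simpa using hiu)]
  rw [D_eq_Dpath k hB, Dpath_eq_of_mem k hB hbd ha1 hface (by simp), herase,
    sum_circuit_vertex_apply]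
  ring

lemma D_eq_zero_of_notMem (hB : ∀ q, b q = a q + stdVec i q) (hbd : bdries k (K I b) 2 = ⊥)
    (ha1 : faces (K I a) 1 = {σ | σ.card = 1}) (hτ : τ ∈ faces (K I b) 2) (hi : i ∉ τ) :
    D k I a b 2 σ τ = 0 := by
  rw [D_eq_Dpath k hB, Dpath_eq_zero_of_notMem k hB hbd ha1 hτ hi]

end OneStepPath

theorem statement5_general (k : Type) [Field k]
    (I : Set V3) (a b : V3)
    (i j l : Fin 3) (hij : i ≠ j) (hil : i ≠ l) (hjl : j ≠ l)
    (hB : ∀ q, b q = a q + stdVec i q)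
    (hKb : hasFacets (K I b) {{i, j}, {i, l}, {j, l}})
    (hKa : hasFacets (K I a) {{i, j}, {l}} ∨ hasFacets (K I a) {{i}, {j}, {l}}) :
    D k I a b 2 {i} {i, j} = coeffSign k j {i, j} / 3 ∧
    D k I a b 2 {j} {i, j} = 2 * coeffSign k i {i, j} / 3 ∧
    D k I a b 2 {l} {i, j} = coeffSign k j {i, j} / 3 ∧
    D k I a b 2 {i} {i, l} = coeffSign k l {i, l} / 3 ∧
    D k I a b 2 {j} {i, l} = coeffSign k l {i, l} / 3 ∧
    D k I a b 2 {l} {i, l} = 2 * coeffSign k i {i, l} / 3 ∧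
    (∀ v : Fin 3, ({v} : Finset (Fin 3)) ∈ K I a →
      D k I a b 2 {v} {j, l} = 0) := by
  have hbd : bdries k (K I b) 2 = ⊥ := bdries_eq_bot_of_faces_eq_empty k
    (hKb.faces_eq_empty (by simp [hij, hil, hjl]))
  have ha1 : faces (K I a) 1 = {σ | σ.card = 1} := by
    rcases hKa with hKa | hKa <;> refine hKa.faces_one_eq fun v => ?_ <;>
      rcases Fin3.eq_or_eq_or_eq hij hil hjl v with rfl | rfl | rfl <;> simp
  have hDij := D_vertex_edge k hB hbd ha1 hij (hKb.mem (by simp) subset_rfl)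
  have hDil := D_vertex_edge k hB hbd ha1 hil (hKb.mem (by simp) subset_rfl)
  have hDjl : ∀ σ, D k I a b 2 σ {j, l} = 0 := fun σ => D_eq_zero_of_notMem k hB hbd ha1
    ⟨hKb.mem (by simp) subset_rfl, Finset.card_pair hjl⟩ (by simp [hij, hil])
  simp [hDij, hDil, hDjl, coeffSign_pair_comm k hij, coeffSign_pair_comm k hil, hij.symm, hil.symm,
    hjl, hjl.symm, neg_div]

/-- If `a = b - e_i`, `K^b I` is `⟨ij,ik,jk⟩`, and `K^a I` is
`⟨ij,k⟩` or `⟨i,j,k⟩`, then the degree-1 sylvan matrix is as displayed. -/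
theorem statement5 (k : Type) [Field k] (h2 : (2:k) ≠ 0) (h3 : (3:k) ≠ 0)
    (I : Set V3) (hI : IsMonomialIdeal I) (a b : V3)
    (i j l : Fin 3) (hij : i ≠ j) (hil : i ≠ l) (hjl : j ≠ l)
    (hB : ∀ q, b q = a q + stdVec i q)
    (hKb : hasFacets (K I b) {{i, j}, {i, l}, {j, l}})
    (hKa : hasFacets (K I a) {{i, j}, {l}} ∨ hasFacets (K I a) {{i}, {j}, {l}}) :
    D k I a b 2 {i} {i, j} = coeffSign k j {i, j} / 3 ∧
    D k I a b 2 {j} {i, j} = 2 * coeffSign k i {i, j} / 3 ∧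
    D k I a b 2 {l} {i, j} = coeffSign k j {i, j} / 3 ∧
    D k I a b 2 {i} {i, l} = coeffSign k l {i, l} / 3 ∧
    D k I a b 2 {j} {i, l} = coeffSign k l {i, l} / 3 ∧
    D k I a b 2 {l} {i, l} = 2 * coeffSign k i {i, l} / 3 ∧
    (∀ v : Fin 3, ({v} : Finset (Fin 3)) ∈ K I a →
      D k I a b 2 {v} {j, l} = 0) :=
  statement5_general k I a b i j l hij hil hjl hB hKb hKa

end Sylvan

end
end
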